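/- arXiv:1907.05689 — 3 statements merged into one kernel-verified Lean document; each statement's English description precedes it below -/
import Mathlib

section
/- Let $\tau \in \mathcal{T}(s)$ with $1 \le \tau \le \sigma := \sigma(s,\lambda)$, where $\sigma(s,\lambda)$ is the optimal hitting time of the Gittins index above level $\lambda$. Then $\mathcal{E}(\sum_{t=\tau+1}^{\sigma} \beta^t (h(s+t) - \lambda) \mid \mathcal{F}_{s+\tau}) \le 0$ almost surely. -/
/-!
Put `S n = ∑_{t=1}^{n} β^t (h(s+t) - λ)` and `g = 𝓔(S_σ - S_τ | ℱ_{s+τ})`. Stopping at `τ` on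
`{g > 0}` and at `σ` elsewhere is again a stopping time `τ' ∈ 𝒯(s)`, and locality and translation
invariance of `𝓔(· | ℱ_{s+τ})` give
`𝓔(S_{τ'} | ℱ_{s+τ}) = S_τ + min(g, 0) ≤ S_τ + g = 𝓔(S_σ | ℱ_{s+τ})`.
Conditioning through `ℱ_{s+τ}` (the tower property at a bounded stopping time), optimality of `σ`
gives the two sides the same `𝓔(· | ℱ_s)`, so by strict monotonicity they agree almost surely,
that is, `g ≤ 0`.
-/

open MeasureTheory Filter Classical Finset

variable {Ω : Type*} [MeasurableSpace Ω]

/-- An `(ℱ t)`-consistent coherent nonlinear expectation (Definition 2.2). -/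
structure ConsistentCNE (μ : Measure Ω) (ℱ : ℕ → MeasurableSpace Ω)
    (E : ℕ → (Ω → ℝ) → (Ω → ℝ)) : Prop where
  adapted : ∀ t X, Measurable[ℱ t] (E t X)
  mono : ∀ t (X Y : Ω → ℝ), Y ≤ᵐ[μ] X → E t Y ≤ᵐ[μ] E t X
  strictMono : ∀ t (X Y : Ω → ℝ), Y ≤ᵐ[μ] X → E t X =ᵐ[μ] E t Y → X =ᵐ[μ] Y
  transl : ∀ t (X c : Ω → ℝ), Measurable[ℱ t] c →
      E t (fun ω => X ω + c ω) =ᵐ[μ] fun ω => E t X ω + c ω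
  normalized : ∀ t, E t (fun _ => 0) =ᵐ[μ] fun _ => 0
  subadd : ∀ t (X Y : Ω → ℝ),
      E t (fun ω => X ω + Y ω) ≤ᵐ[μ] fun ω => E t X ω + E t Y ω
  posHom : ∀ t (X lam : Ω → ℝ), Measurable[ℱ t] lam → (∀ᵐ ω ∂μ, 0 ≤ lam ω) →
      E t (fun ω => lam ω * X ω) =ᵐ[μ] fun ω => lam ω * E t X ω
  lebesgue : ∀ t (Xn : ℕ → Ω → ℝ) (X : Ω → ℝ) (K : ℝ),
      (∀ n, ∀ᵐ ω ∂μ, |Xn n ω| ≤ K) →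
      (∀ᵐ ω ∂μ, Tendsto (fun n => Xn n ω) atTop (nhds (X ω))) →
      ∀ᵐ ω ∂μ, Tendsto (fun n => E t (Xn n) ω) atTop (nhds (E t X ω))
  tower : ∀ s t (X : Ω → ℝ), s ≤ t → E s X =ᵐ[μ] E s (E t X)

/-- `𝒯(s)`: the bounded positive `(ℱ (s+t))`-stopping times. -/
def stopTimes (ℱ : ℕ → MeasurableSpace Ω) (s : ℕ) : Set (Ω → ℕ) :=
  {τ | (∀ ω, 1 ≤ τ ω) ∧ (∃ B, ∀ ω, τ ω ≤ B) ∧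
    ∀ n, MeasurableSet[ℱ (s + n)] {ω | τ ω = n}}

/-- The optimal-stopping value
`V(τ, λ) = 𝓔(∑_{t=1}^{τ} β^t (h(s+t) - λ) | ℱ_s)`. -/
noncomputable def banditV (E : ℕ → (Ω → ℝ) → (Ω → ℝ)) (h : ℕ → Ω → ℝ) (β : ℝ)
    (s : ℕ) (τ : Ω → ℕ) (lam : Ω → ℝ) : Ω → ℝ :=
  E s (fun ω => ∑ t ∈ Finset.Icc 1 (τ ω), β ^ t * (h (s + t) ω - lam ω))

/-- The hitting time `σ(s, λ) = inf {θ ≥ 1 : γ(s + θ) > λ}` of the Gittins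
index process above a level `λ < C` (Definition 4.1). -/
noncomputable def hitTime (γ : ℕ → Ω → ℝ) (s : ℕ) (lam : Ω → ℝ) : Ω → ℕ :=
  fun ω => sInf {θ : ℕ | 1 ≤ θ ∧ lam ω < γ (s + θ) ω}

section StoppedMeasurableSet

variable {α : Type*}

/-- The events of the stopped σ-algebra `ℱ_{s+τ}`. -/
def StoppedMeasurableSet (ℱ : ℕ → MeasurableSpace α) (s : ℕ) (τ : α → ℕ) (A : Set α) : Prop :=
  ∀ n, MeasurableSet[ℱ (s + n)] (A ∩ {ω | τ ω = n})

variable {ℱ : ℕ → MeasurableSpace α} {s : ℕ} {τ : α → ℕ} {A : Set α}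

lemma stoppedMeasurableSet_univ (hτ : ∀ n, MeasurableSet[ℱ (s + n)] {ω | τ ω = n}) :
    StoppedMeasurableSet ℱ s τ Set.univ := fun n => by
  simpa only [Set.univ_inter] using hτ n

lemma StoppedMeasurableSet.compl (hτ : ∀ n, MeasurableSet[ℱ (s + n)] {ω | τ ω = n})
    (hA : StoppedMeasurableSet ℱ s τ A) : StoppedMeasurableSet ℱ s τ Aᶜ := fun n => by
  have : Aᶜ ∩ {ω | τ ω = n} = {ω | τ ω = n} \ (A ∩ {ω | τ ω = n}) := by
    rw [Set.sdiff_inter_self_eq_sdiff, Set.sdiff_eq, Set.inter_comm]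
  rw [this]
  exact (hτ n).diff (hA n)

lemma StoppedMeasurableSet.inter_le (hℱ : Monotone ℱ) (hA : StoppedMeasurableSet ℱ s τ A)
    (n : ℕ) : MeasurableSet[ℱ (s + n)] (A ∩ {ω | τ ω ≤ n}) := by
  have : A ∩ {ω | τ ω ≤ n} = ⋃ k ∈ Set.Iic n, A ∩ {ω | τ ω = k} := by
    ext ω; simp
  rw [this]
  exact MeasurableSet.biUnion (Set.Iic n).to_countable fun k hk =>
    hℱ (Nat.add_le_add_left hk s) _ (hA k)

lemma piecewise_mem_stopTimes (hℱ : Monotone ℱ) {σ : α → ℕ} (hτ : τ ∈ stopTimes ℱ s)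
    (hσ : σ ∈ stopTimes ℱ s) (hτσ : ∀ ω, τ ω ≤ σ ω) (hA : StoppedMeasurableSet ℱ s τ A) :
    A.piecewise σ τ ∈ stopTimes ℱ s := by
  obtain ⟨hτ1, ⟨Bτ, hBτ⟩, hτm⟩ := hτ
  obtain ⟨hσ1, ⟨Bσ, hBσ⟩, hσm⟩ := hσ
  refine ⟨fun ω => ?_, ⟨max Bσ Bτ, fun ω => ?_⟩, fun n => ?_⟩
  · by_cases hω : ω ∈ A <;> simp [hω, hτ1, hσ1]
  · by_cases hω : ω ∈ A <;> simp [hω, hBτ, hBσ]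
  · have : {ω | A.piecewise σ τ ω = n}
        = {ω | σ ω = n} ∩ (A ∩ {ω | τ ω ≤ n}) ∪ Aᶜ ∩ {ω | τ ω = n} := by
      ext ω
      by_cases hω : ω ∈ A
      · simpa [hω] using fun h => h ▸ hτσ ω
      · simp [hω]
    rw [this]
    exact ((hσm n).inter (hA.inter_le hℱ n)).union (hA.compl hτm n)

end StoppedMeasurableSet

/-- `𝓔(X | ℱ_{s+τ})`, read off pathwise on each event `{τ = n}`. -/
noncomputable def stoppedCondExp (E : ℕ → (Ω → ℝ) → (Ω → ℝ)) (s : ℕ) (τ : Ω → ℕ)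
    (X : Ω → ℝ) : Ω → ℝ :=
  fun ω => E (s + τ ω) X ω

namespace ConsistentCNE

variable {μ : Measure Ω} {ℱ : ℕ → MeasurableSpace Ω} {E : ℕ → (Ω → ℝ) → (Ω → ℝ)}
  {s : ℕ} {τ : Ω → ℕ}

lemma congr_ae (hE : ConsistentCNE μ ℱ E) {t : ℕ} {X Y : Ω → ℝ} (h : X =ᵐ[μ] Y) :
    E t X =ᵐ[μ] E t Y :=
  (hE.mono t Y X h.le).antisymm (hE.mono t X Y h.symm.le)

lemma idem (hE : ConsistentCNE μ ℱ E) (t : ℕ) (X : Ω → ℝ) : E t (E t X) =ᵐ[μ] E t X :=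
  (hE.tower t t X le_rfl).symm

lemma ae_eq_on (hE : ConsistentCNE μ ℱ E) {t : ℕ} {A : Set Ω} (hA : MeasurableSet[ℱ t] A)
    {X Y : Ω → ℝ} (hXY : ∀ ω ∈ A, X ω = Y ω) : ∀ᵐ ω ∂μ, ω ∈ A → E t X ω = E t Y ω := by
  set w : Ω → ℝ := A.indicator fun _ => 1
  have hind : Measurable[ℱ t] w := measurable_const.indicator hA
  have hpos : ∀ᵐ ω ∂μ, 0 ≤ w ω := .of_forall (Set.indicator_nonneg fun _ _ => zero_le_one)
  have heq : (fun ω => w ω * X ω) = fun ω => w ω * Y ω := by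
    funext ω; by_cases hω : ω ∈ A <;> simp [w, hω, hXY]
  filter_upwards [hE.posHom t X _ hind hpos, hE.posHom t Y _ hind hpos] with ω hX hY hω
  rw [heq] at hX
  simpa [w, hω] using hX.symm.trans hY

lemma tower_stoppedCondExp (hE : ConsistentCNE μ ℱ E) (hℱ : Monotone ℱ) {B : ℕ}
    (hB : ∀ ω, τ ω ≤ B) (hτ : ∀ n, MeasurableSet[ℱ (s + n)] {ω | τ ω = n}) (X : Ω → ℝ) :
    E s X =ᵐ[μ] E s (stoppedCondExp E s τ X) := by
  -- `Z n = 𝓔(X | ℱ_{s + max τ n})` interpolates between `Z 0 = 𝓔(X | ℱ_{s+τ})` and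
  -- `Z B = 𝓔(X | ℱ_{s+B})`.
  let Z : ℕ → Ω → ℝ := fun n => stoppedCondExp E s (fun ω => max (τ ω) n) X
  have hZ : ∀ n ≤ B, E (s + n) (Z n) =ᵐ[μ] E (s + n) X := by
    intro n hn
    induction hn using Nat.decreasingInduction with
    | self =>
      have : Z B = E (s + B) X := funext fun ω => by simp [Z, stoppedCondExp, hB ω]
      rw [this]
      exact hE.idem _ X
    | of_succ n _ ih =>
      have hle : MeasurableSet[ℱ (s + n)] {ω | τ ω ≤ n} := by
        simpa using (stoppedMeasurableSet_univ hτ).inter_le hℱ n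
      have hstopped := hE.ae_eq_on hle (X := Z n) (Y := E (s + n) X) fun ω hω => by
        simp [Z, stoppedCondExp, max_eq_right (show τ ω ≤ n from hω)]
      have hcont := hE.ae_eq_on hle.compl (X := Z n) (Y := Z (n + 1)) fun ω hω => by
        have : n + 1 ≤ τ ω := by simpa using hω
        simp [Z, stoppedCondExp, max_eq_left this, max_eq_left (Nat.le_of_succ_le this)]
      have hnext : E (s + n) (Z (n + 1)) =ᵐ[μ] E (s + n) X :=
        calc E (s + n) (Z (n + 1))
            =ᵐ[μ] E (s + n) (E (s + (n + 1)) (Z (n + 1))) := hE.tower _ _ _ (by omega)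
          _ =ᵐ[μ] E (s + n) (E (s + (n + 1)) X) := hE.congr_ae ih
          _ =ᵐ[μ] E (s + n) X := (hE.tower _ _ _ (by omega)).symm
      filter_upwards [hstopped, hcont, hnext, hE.idem (s + n) X] with ω h1 h2 h3 h4
      by_cases hω : τ ω ≤ n
      · rw [h1 hω, h4]
      · rw [h2 hω, h3]
  simpa [Z] using (hZ 0 (Nat.zero_le B)).symm

lemma stoppedCondExp_ae_eq_on (hE : ConsistentCNE μ ℱ E) {A : Set Ω}
    (hA : StoppedMeasurableSet ℱ s τ A) {X Y : Ω → ℝ} (hXY : ∀ ω ∈ A, X ω = Y ω) :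
    ∀ᵐ ω ∂μ, ω ∈ A → stoppedCondExp E s τ X ω = stoppedCondExp E s τ Y ω := by
  filter_upwards [ae_all_iff.2 fun n => hE.ae_eq_on (hA n) fun ω hω => hXY ω hω.1]
    with ω hω hωA using hω (τ ω) ⟨hωA, rfl⟩

lemma stoppedCondExp_add_stopped (hE : ConsistentCNE μ ℱ E)
    (hτ : ∀ n, MeasurableSet[ℱ (s + n)] {ω | τ ω = n}) {c : ℕ → Ω → ℝ}
    (hc : ∀ n, Measurable[ℱ (s + n)] (c n)) (X : Ω → ℝ) :
    stoppedCondExp E s τ (fun ω => X ω + c (τ ω) ω)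
      =ᵐ[μ] fun ω => stoppedCondExp E s τ X ω + c (τ ω) ω := by
  have hlevel : ∀ n, ∀ᵐ ω ∂μ, τ ω = n →
      E (s + n) (fun ω => X ω + c (τ ω) ω) ω = E (s + n) X ω + c n ω := fun n => by
    filter_upwards [hE.ae_eq_on (hτ n) (X := fun ω => X ω + c (τ ω) ω)
      (Y := fun ω => X ω + c n ω) fun ω hω => by rw [show τ ω = n from hω],
      hE.transl (s + n) X (c n) (hc n)] with ω h1 h2 hω using (h1 hω).trans h2
  filter_upwards [ae_all_iff.2 hlevel] with ω hω using hω (τ ω) rfl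

lemma stoppedCondExp_stopped (hE : ConsistentCNE μ ℱ E)
    (hτ : ∀ n, MeasurableSet[ℱ (s + n)] {ω | τ ω = n}) {c : ℕ → Ω → ℝ}
    (hc : ∀ n, Measurable[ℱ (s + n)] (c n)) :
    stoppedCondExp E s τ (fun ω => c (τ ω) ω) =ᵐ[μ] fun ω => c (τ ω) ω := by
  filter_upwards [hE.stoppedCondExp_add_stopped hτ hc (fun _ => 0),
    ae_all_iff.2 fun n => hE.normalized (s + n)] with ω h1 h2
  simp only [zero_add] at h1
  rw [h1, stoppedCondExp, h2, zero_add]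

lemma stoppedMeasurableSet_stoppedCondExp_preimage (hE : ConsistentCNE μ ℱ E)
    (hτ : ∀ n, MeasurableSet[ℱ (s + n)] {ω | τ ω = n}) (X : Ω → ℝ) {B : Set ℝ}
    (hB : MeasurableSet B) : StoppedMeasurableSet ℱ s τ (stoppedCondExp E s τ X ⁻¹' B) :=
  fun n => by
    have : stoppedCondExp E s τ X ⁻¹' B ∩ {ω | τ ω = n} = E (s + n) X ⁻¹' B ∩ {ω | τ ω = n} := by
      ext ω
      simp +contextual [stoppedCondExp]
    rw [this]
    exact (hE.adapted _ X hB).inter (hτ n)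

theorem stoppedCondExp_nonpos_of_optimal (hE : ConsistentCNE μ ℱ E) (hℱ : Monotone ℱ)
    {S : ℕ → Ω → ℝ} (hS : ∀ n, Measurable[ℱ (s + n)] (S n)) {σ : Ω → ℕ}
    (hτ : τ ∈ stopTimes ℱ s) (hσ : σ ∈ stopTimes ℱ s) (hτσ : ∀ ω, τ ω ≤ σ ω)
    (hσOpt : ∀ τ' ∈ stopTimes ℱ s,
      E s (fun ω => S (σ ω) ω) ≤ᵐ[μ] E s (fun ω => S (τ' ω) ω))
    {Y : Ω → ℝ} (hY : ∀ ω, S (σ ω) ω = Y ω + S (τ ω) ω) :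
    stoppedCondExp E s τ Y ≤ᵐ[μ] 0 := by
  obtain ⟨-, ⟨B, hB⟩, hτm⟩ := id hτ
  set g := stoppedCondExp E s τ Y
  set A := g ⁻¹' Set.Iic 0
  have hA : StoppedMeasurableSet ℱ s τ A :=
    hE.stoppedMeasurableSet_stoppedCondExp_preimage hτm Y measurableSet_Iic
  set W := stoppedCondExp E s τ fun ω => S (σ ω) ω
  set U := stoppedCondExp E s τ fun ω => S (A.piecewise σ τ ω) ω
  have hW : W =ᵐ[μ] fun ω => g ω + S (τ ω) ω := by
    change stoppedCondExp E s τ (fun ω => S (σ ω) ω) =ᵐ[μ] _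
    simp only [hY]
    exact hE.stoppedCondExp_add_stopped hτm hS Y
  have hUA : ∀ᵐ ω ∂μ, ω ∈ A → U ω = W ω :=
    hE.stoppedCondExp_ae_eq_on hA fun ω hω => by simp [hω]
  have hUAc : ∀ᵐ ω ∂μ, ω ∉ A → U ω = S (τ ω) ω := by
    filter_upwards [hE.stoppedCondExp_ae_eq_on (hA.compl hτm)
      (X := fun ω => S (A.piecewise σ τ ω) ω) (Y := fun ω => S (τ ω) ω)
      fun ω hω => by rw [Set.piecewise_eq_of_notMem _ _ _ hω], hE.stoppedCondExp_stopped hτm hS]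
      with ω h1 h2 hω using (h1 hω).trans h2
  have hUW : U ≤ᵐ[μ] W := by
    filter_upwards [hW, hUA, hUAc] with ω hW hUA hUAc
    by_cases hω : ω ∈ A
    · exact (hUA hω).le
    · have : 0 < g ω := by simpa [A] using hω
      rw [hUAc hω, hW]; linarith
  have hWU : E s W ≤ᵐ[μ] E s U :=
    calc E s W =ᵐ[μ] E s fun ω => S (σ ω) ω := (hE.tower_stoppedCondExp hℱ hB hτm _).symm
      _ ≤ᵐ[μ] E s fun ω => S (A.piecewise σ τ ω) ω :=
        hσOpt _ (piecewise_mem_stopTimes hℱ hτ hσ hτσ hA)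
      _ =ᵐ[μ] E s U := hE.tower_stoppedCondExp hℱ hB hτm _
  have hWeqU : W =ᵐ[μ] U := hE.strictMono s W U hUW (hWU.antisymm (hE.mono s W U hUW))
  filter_upwards [hWeqU, hW, hUAc] with ω hWU hW hUAc
  by_contra hpos
  have hg : 0 < g ω := lt_of_not_ge hpos
  linarith [hUAc hpos]

end ConsistentCNE

theorem stmt10_general (μ : Measure Ω)
    (ℱ : ℕ → MeasurableSpace Ω) (hℱmono : Monotone ℱ)
    (E : ℕ → (Ω → ℝ) → (Ω → ℝ)) (hE : ConsistentCNE μ ℱ E)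
    (β : ℝ)
    (h : ℕ → Ω → ℝ) (hhAdapted : ∀ t, Measurable[ℱ t] (h t))
    -- the robust Gittins index process
    (γ : ℕ → Ω → ℝ)
    (s : ℕ) (lam : Ω → ℝ) (hlamMeas : Measurable[ℱ s] lam)
    -- `σ(s,λ)` is a bounded positive stopping time minimizing `V(·,λ)`
    (hσStop : hitTime γ s lam ∈ stopTimes ℱ s)
    (hσOpt : ∀ τ' ∈ stopTimes ℱ s,
      banditV E h β s (hitTime γ s lam) lam ≤ᵐ[μ] banditV E h β s τ' lam)
    (τ : Ω → ℕ) (hτ : τ ∈ stopTimes ℱ s)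
    (hτσ : ∀ ω, τ ω ≤ hitTime γ s lam ω) :
    (fun ω => E (s + τ ω)
      (fun ω' => ∑ t ∈ Finset.Icc (τ ω' + 1) (hitTime γ s lam ω'),
        β ^ t * (h (s + t) ω' - lam ω')) ω) ≤ᵐ[μ] 0 := by
  set S : ℕ → Ω → ℝ := fun n ω => ∑ t ∈ Icc 1 n, β ^ t * (h (s + t) ω - lam ω)
  have hS : ∀ n, Measurable[ℱ (s + n)] (S n) := fun n =>
    Finset.measurable_sum _ fun t ht => measurable_const.mul
      (((hhAdapted _).mono (hℱmono (by simp at ht; omega)) le_rfl).sub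
        (hlamMeas.mono (hℱmono (Nat.le_add_right s n)) le_rfl))
  refine hE.stoppedCondExp_nonpos_of_optimal hℱmono hS hτ hσStop hτσ hσOpt fun ω => ?_
  have hIcc : ∀ n, Icc 1 n = Ioc 0 n := Finset.Icc_add_one_left_eq_Ioc 0
  simp only [S, hIcc, Finset.Icc_add_one_left_eq_Ioc]
  rw [add_comm, Finset.sum_Ioc_consecutive _ (Nat.zero_le _) (hτσ ω)]

/-- **Lemma A.8.**  Let `τ ∈ 𝒯(s)` with `1 ≤ τ ≤ σ := σ(s,λ)`, where
`σ(s,λ)` is the optimal hitting time of the Gittins index above level `λ`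
(which minimizes `V(·,λ)` over `𝒯(s)`).  Then
`𝓔(∑_{t=τ+1}^{σ} β^t (h(s+t) - λ) | ℱ_{s+τ}) ≤ 0` a.s. -/
theorem stmt10 (μ : Measure Ω) [IsProbabilityMeasure μ]
    (ℱ : ℕ → MeasurableSpace Ω) (hℱmono : Monotone ℱ)
    (hℱle : ∀ t, ℱ t ≤ ‹MeasurableSpace Ω›)
    (E : ℕ → (Ω → ℝ) → (Ω → ℝ)) (hE : ConsistentCNE μ ℱ E)
    (T : ℕ) (C : ℝ) (hC : 0 < C) (β : ℝ) (hβ : β ∈ Set.Ioo (0 : ℝ) 1)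
    (h : ℕ → Ω → ℝ) (hhAdapted : ∀ t, Measurable[ℱ t] (h t))
    (hhBdd : ∀ t, t ≤ T → ∀ ω, 0 ≤ h t ω ∧ h t ω < C)
    (hhC : ∀ t, T < t → ∀ ω, h t ω = C)
    -- the robust Gittins index process
    (γ : ℕ → Ω → ℝ) (hγAdapted : ∀ t, Measurable[ℱ t] (γ t))
    (hγBdd : ∀ t, t < T → ∀ ω, 0 ≤ γ t ω ∧ γ t ω < C)
    (hγC : ∀ t, T ≤ t → ∀ ω, γ t ω = C)
    (s : ℕ) (lam : Ω → ℝ) (hlamMeas : Measurable[ℱ s] lam)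
    (hlam : ∀ ω, 0 ≤ lam ω ∧ lam ω < C)
    -- `σ(s,λ)` is a bounded positive stopping time minimizing `V(·,λ)`
    (hσStop : hitTime γ s lam ∈ stopTimes ℱ s)
    (hσOpt : ∀ τ' ∈ stopTimes ℱ s,
      banditV E h β s (hitTime γ s lam) lam ≤ᵐ[μ] banditV E h β s τ' lam)
    (τ : Ω → ℕ) (hτ : τ ∈ stopTimes ℱ s)
    (hτσ : ∀ ω, τ ω ≤ hitTime γ s lam ω) :
    (fun ω => E (s + τ ω)
      (fun ω' => ∑ t ∈ Finset.Icc (τ ω' + 1) (hitTime γ s lam ω'),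
        β ^ t * (h (s + t) ω' - lam ω')) ω) ≤ᵐ[μ] 0 :=
  stmt10_general μ ℱ hℱmono E hE β h hhAdapted γ s lam hlamMeas hσStop hσOpt τ hτ hτσ
end

section
/- Let $\mathfrak{E}_S(X) := \operatorname{esssup}_{\mathbb{Q}\in\mathcal{Q}} \mathbb{E}^{\mathbb{Q}}(X \mid \mathcal{F}(S))$ where $\mathcal{Q} = \{\bigotimes_m \mathbb{Q}^{(m)} : \mathbb{Q}^{(m)} \in \mathcal{Q}^{(m)}\}$ on a product probability space. If $Y(\omega^{(1)},\dots,\omega^{(M)}) = X^{(1)}(\omega^{(1)}) \cdots X^{(M)}(\omega^{(M)})$ where each $X^{(m)}$ is a nonnegative bounded random variable on $(\Omega^{(m)}, \mathcal{F}^{(m)})$, then $\mathfrak{E}_S(Y) = \prod_{m=1}^M \mathcal{E}^{(m)}(X^{(m)} \mid \mathcal{F}^{(m)}_{S^{(m)}})$ a.s., where $\mathcal{E}^{(m)}(\cdot \mid \mathcal{F}^{(m)}_{S^{(m)}}) = \operatorname{esssup}_{\mathbb{Q}\in\mathcal{Q}^{(m)}}\mathbb{E}^{\mathbb{Q}}(\cdot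 \mid \mathcal{F}^{(m)}_{S^{(m)}})$. -/
/-!
Under a product measure `Measure.pi q`, the conditional expectation of `∏ i, X i (ω i)` given the
product σ-algebra factorises as `∏ i, (q i)[X i | m' i] (ω i)`: both sides have the same integrals
over measurable boxes, which form a π-system. As all these conditional expectations are
nonnegative, this bounds every `Q[Y | ℱ(S)]`, `Q ∈ productFamily 𝒬`, by `∏ i, Em i (X i) (ω i)`.
Conversely, each marginal essential supremum `Em i (X i)` is a pointwise supremum along a sequence
of measures in `𝒬 i`; `ES Y` dominates the factorised conditional expectations for the countably
many product choices along these sequences, and taking suprema coordinatewise gives the reverse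
inequality.
-/

open MeasureTheory Filter Set Topology

/-- The family of product measures built from the marginal families `𝒬 i`. -/
def productFamily {ι : Type*} [Fintype ι] {Ω : ι → Type*}
    [mΩ : ∀ i, MeasurableSpace (Ω i)]
    (𝒬 : ∀ i, Set (Measure (Ω i))) : Set (Measure (∀ i, Ω i)) :=
  {Q | ∃ q : ∀ i, Measure (Ω i), ∃ hq : ∀ i, IsProbabilityMeasure (q i),
    (∀ i, q i ∈ 𝒬 i) ∧
    Q = by haveI := hq; exact Measure.pi q}

theorem prod_ciSup_le_of_forall_prod_le {ι : Type*} [Fintype ι] {κ : ι → Type*}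
    [∀ i, Nonempty (κ i)] {a : ∀ i, κ i → ℝ} (ha : ∀ i, BddAbove (range (a i))) {c : ℝ}
    (h : ∀ σ : ∀ i, κ i, ∏ i, a i (σ i) ≤ c) : ∏ i, ⨆ k, a i k ≤ c := by
  have hseq : ∀ i, ∃ σ : ℕ → κ i, Tendsto (fun n => a i (σ n)) atTop (𝓝 (⨆ k, a i k)) := by
    intro i
    obtain ⟨y, -, hy, hmem⟩ := exists_seq_tendsto_sSup (range_nonempty (a i)) (ha i)
    choose σ hσ using hmem
    exact ⟨σ, by simp only [hσ]; exact hy⟩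
  choose σ hσ using hseq
  exact le_of_tendsto' (tendsto_finsetProd _ fun i _ => hσ i) fun n => h fun i => σ i n

namespace MeasureTheory

theorem Measure.ae_pi_of_forall {ι : Type*} [Fintype ι] {Ω : ι → Type*}
    [∀ i, MeasurableSpace (Ω i)] {μ : ∀ i, Measure (Ω i)} [∀ i, SigmaFinite (μ i)]
    {p : ∀ i, Ω i → Prop} (h : ∀ i, ∀ᵐ x ∂μ i, p i x) :
    ∀ᵐ ω ∂Measure.pi μ, ∀ i, p i (ω i) :=
  Measure.ae_pi_le_pi (eventually_pi h)

theorem ae_prod_ciSup_le {ι : Type*} [Fintype ι] {Ω : ι → Type*} [∀ i, MeasurableSpace (Ω i)]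
    {μ : ∀ i, Measure (Ω i)} [∀ i, SigmaFinite (μ i)] {κ : Type*} [Countable κ] [Nonempty κ]
    {f : ∀ i, κ → Ω i → ℝ} (hf : ∀ i, ∀ᵐ x ∂μ i, BddAbove (range fun k => f i k x))
    {Z : (∀ i, Ω i) → ℝ} (h : ∀ σ : ι → κ, (fun ω => ∏ i, f i (σ i) (ω i)) ≤ᵐ[Measure.pi μ] Z) :
    (fun ω => ∏ i, ⨆ k, f i k (ω i)) ≤ᵐ[Measure.pi μ] Z := by
  filter_upwards [ae_all_iff.2 h, Measure.ae_pi_of_forall hf] with ω hσ hbdd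
  exact prod_ciSup_le_of_forall_prod_le hbdd hσ

theorem Measure.AbsolutelyContinuous.pi_fin : ∀ {n : ℕ} {α : Fin n → Type*}
    [∀ i, MeasurableSpace (α i)] {μ ν : ∀ i, Measure (α i)}
    [∀ i, SigmaFinite (μ i)] [∀ i, SigmaFinite (ν i)],
    (∀ i, μ i ≪ ν i) → Measure.pi μ ≪ Measure.pi ν
  | 0, _, _, _, _, _, _, _ => by rw [Measure.pi_of_empty, Measure.pi_of_empty]
  | n + 1, α, _, μ, ν, _, _, h => by
    rw [← ((measurePreserving_piFinSuccAbove μ 0).symm).map_eq,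
      ← ((measurePreserving_piFinSuccAbove ν 0).symm).map_eq]
    exact ((h 0).prod (pi_fin fun j => h _)).map
      (MeasurableEquiv.piFinSuccAbove α 0).symm.measurable

theorem Measure.AbsolutelyContinuous.pi {ι : Type*} [Fintype ι] {Ω : ι → Type*}
    [∀ i, MeasurableSpace (Ω i)] {μ ν : ∀ i, Measure (Ω i)}
    [∀ i, SigmaFinite (μ i)] [∀ i, SigmaFinite (ν i)]
    (h : ∀ i, μ i ≪ ν i) : Measure.pi μ ≪ Measure.pi ν := by
  let e := (Fintype.equivFin ι).symm
  rw [← (measurePreserving_piCongrLeft μ e).map_eq, ← (measurePreserving_piCongrLeft ν e).map_eq]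
  exact (pi_fin fun i => h (e i)).map (MeasurableEquiv.piCongrLeft Ω e).measurable

theorem exists_seq_ae_le_iSup {α κ : Type*} [MeasurableSpace α] {μ : Measure α}
    [IsFiniteMeasure μ] [Nonempty κ] {f : κ → α → ℝ} {a b : ℝ} (hf : ∀ k, Measurable (f k))
    (hab : ∀ k, ∀ᵐ x ∂μ, f k x ∈ Icc a b) :
    ∃ u : ℕ → κ, ∀ k, f k ≤ᵐ[μ] fun x => ⨆ n, f (u n) x := by
  set F : (ℕ → κ) → α → ℝ := fun v x => ⨆ n, f (v n) x
  have hbdd : ∀ v : ℕ → κ, ∀ᵐ x ∂μ, ∀ n, f (v n) x ∈ Icc a b := fun v =>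
    ae_all_iff.2 fun n => hab (v n)
  have hle : ∀ {k : κ} {w : ℕ → κ}, k ∈ range w → f k ≤ᵐ[μ] F w := by
    rintro k w ⟨m, rfl⟩
    filter_upwards [hbdd w] with x hx
    exact le_ciSup ⟨b, forall_mem_range.2 fun n => (hx n).2⟩ m
  have hmono : ∀ {v w : ℕ → κ}, range v ⊆ range w → F v ≤ᵐ[μ] F w := fun hvw => by
    filter_upwards [ae_all_iff.2 fun n => hle (hvw (mem_range_self n))] with x hx
    exact ciSup_le hx
  have hint : ∀ v, Integrable (F v) μ := fun v => by
    refine Integrable.of_mem_Icc a b (Measurable.iSup fun n => hf (v n)).aemeasurable ?_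
    filter_upwards [hbdd v, hle (mem_range_self 0)] with x hx h0
    exact ⟨(hx 0).1.trans h0, ciSup_le fun n => (hx n).2⟩
  -- `U` maximises `∫ F v` over countable subfamilies `v`, so adjoining any `k` to `U` changes
  -- `F U` only on a null set
  set S : (ℕ → κ) → ℝ := fun v => ∫ x, F v x ∂μ
  have hSbdd : BddAbove (range S) := by
    refine ⟨∫ _, b ∂μ, forall_mem_range.2 fun v =>
      integral_mono_ae (hint v) (integrable_const b) ?_⟩
    filter_upwards [hbdd v] with x hx
    exact ciSup_le fun n => (hx n).2
  obtain ⟨y, -, hy, hyS⟩ := exists_seq_tendsto_sSup (range_nonempty S) hSbdd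
  choose V hV using hyS
  let U : ℕ → κ := fun n => V n.unpair.1 n.unpair.2
  have hU : sSup (range S) ≤ S U := by
    refine le_of_tendsto' hy fun m => hV m ▸ integral_mono_ae (hint _) (hint _) (hmono ?_)
    rintro _ ⟨n, rfl⟩
    exact ⟨Nat.pair m n, by simp [U]⟩
  refine ⟨U, fun k => ?_⟩
  let W : ℕ → κ := fun n => Nat.casesOn n k U
  have hUW : F U ≤ᵐ[μ] F W := hmono fun _ ⟨n, hn⟩ => ⟨n + 1, hn⟩
  have hWU : F W =ᵐ[μ] F U := ((integral_eq_iff_of_ae_le (hint U) (hint W) hUW).1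
    (le_antisymm (integral_mono_ae (hint U) (hint W) hUW)
      ((le_csSup hSbdd (mem_range_self W)).trans hU))).symm
  exact (hle ⟨0, rfl⟩).trans hWU.le

theorem exists_seq_mem_ae_eq_iSup {α β : Type*} [MeasurableSpace α] {μ : Measure α}
    [IsFiniteMeasure μ] {𝒬 : Set β} (h𝒬 : 𝒬.Nonempty) {f : β → α → ℝ} {a b : ℝ}
    (hf : ∀ q ∈ 𝒬, Measurable (f q)) (hab : ∀ q ∈ 𝒬, ∀ᵐ x ∂μ, f q x ∈ Icc a b) {E : α → ℝ}
    (hE : ∀ q ∈ 𝒬, f q ≤ᵐ[μ] E) (hE_least : ∀ Z, (∀ q ∈ 𝒬, f q ≤ᵐ[μ] Z) → E ≤ᵐ[μ] Z) :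
    ∃ u : ℕ → β, (∀ n, u n ∈ 𝒬) ∧ E =ᵐ[μ] fun x => ⨆ n, f (u n) x := by
  have := h𝒬.to_subtype
  obtain ⟨u, hu⟩ := exists_seq_ae_le_iSup (f := fun q : 𝒬 => f q) (fun q => hf q q.2)
    fun q => hab q q.2
  refine ⟨fun n => u n, fun n => (u n).2, (hE_least _ fun q hq => hu ⟨q, hq⟩).antisymm ?_⟩
  filter_upwards [ae_all_iff.2 fun n => hE _ (u n).2] with x hx
  exact ciSup_le hx

theorem ae_condExp_mem_Icc {α : Type*} {m m₀ : MeasurableSpace α} {μ : Measure α}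
    [IsFiniteMeasure μ] (hm : m ≤ m₀) {f : α → ℝ} {a b : ℝ} (hf : Integrable f μ)
    (hab : ∀ᵐ x ∂μ, f x ∈ Icc a b) : ∀ᵐ x ∂μ, μ[f | m] x ∈ Icc a b := by
  have ha := condExp_mono (m := m) (integrable_const a) hf (hab.mono fun x hx => hx.1)
  have hb := condExp_mono (m := m) hf (integrable_const b) (hab.mono fun x hx => hx.2)
  rw [condExp_const hm] at ha hb
  filter_upwards [ha, hb] with x hxa hxb
  exact ⟨hxa, hxb⟩

theorem ae_eq_condExp_of_forall_setIntegral_eq_of_isPiSystem {α E : Type*}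
    [NormedAddCommGroup E] [NormedSpace ℝ E] [CompleteSpace E] {m m₀ : MeasurableSpace α}
    {μ : Measure α} [IsFiniteMeasure μ] (hm : m ≤ m₀) {C : Set (Set α)}
    (hgen : m = MeasurableSpace.generateFrom C) (hC : IsPiSystem C) {f g : α → E}
    (hf : Integrable f μ) (hg : Integrable g μ) (hgm : AEStronglyMeasurable[m] g μ)
    (hg_eq : ∀ s ∈ C, ∫ x in s, g x ∂μ = ∫ x in s, f x ∂μ)
    (hg_univ : ∫ x, g x ∂μ = ∫ x, f x ∂μ) : g =ᵐ[μ] μ[f | m] := by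
  suffices h : ∀ s, MeasurableSet[m] s → ∫ x in s, g x ∂μ = ∫ x in s, f x ∂μ from
    ae_eq_condExp_of_forall_setIntegral_eq hm hf (fun _ _ _ => hg.integrableOn)
      (fun s hs _ => h s hs) hgm
  intro s hs
  induction s, hs using MeasurableSpace.induction_on_inter hgen hC with
  | empty => simp
  | basic t ht => exact hg_eq t ht
  | compl t ht iht =>
    rw [setIntegral_compl (hm t ht) hg, setIntegral_compl (hm t ht) hf, iht, hg_univ]
  | iUnion t htd htm iht =>
    rw [integral_iUnion (fun n => hm _ (htm n)) htd hg.integrableOn,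
      integral_iUnion (fun n => hm _ (htm n)) htd hf.integrableOn]
    exact tsum_congr iht

theorem setIntegral_univ_pi_prod {𝕜 ι : Type*} [RCLike 𝕜] [Fintype ι] {Ω : ι → Type*}
    [∀ i, MeasurableSpace (Ω i)] {μ : ∀ i, Measure (Ω i)} [∀ i, SigmaFinite (μ i)]
    (F : ∀ i, Ω i → 𝕜) (s : ∀ i, Set (Ω i)) :
    ∫ ω in univ.pi s, ∏ i, F i (ω i) ∂Measure.pi μ = ∏ i, ∫ x in s i, F i x ∂μ i := by
  rw [Measure.restrict_pi_pi]
  exact integral_fintype_prod_eq_prod F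

theorem condExp_pi_prod {ι : Type*} [Fintype ι] {Ω : ι → Type*}
    {m : ∀ i, MeasurableSpace (Ω i)} [mΩ : ∀ i, MeasurableSpace (Ω i)] (hm : ∀ i, m i ≤ mΩ i)
    {μ : ∀ i, Measure (Ω i)} [∀ i, IsFiniteMeasure (μ i)] {X : ∀ i, Ω i → ℝ}
    (hX : ∀ i, Integrable (X i) (μ i)) :
    (Measure.pi μ)[fun ω => ∏ i, X i (ω i) | MeasurableSpace.pi (m := m)]
      =ᵐ[Measure.pi μ] fun ω => ∏ i, (μ i)[X i | m i] (ω i) := by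
  have hle : MeasurableSpace.pi (m := m) ≤ MeasurableSpace.pi :=
    iSup_mono fun i => MeasurableSpace.comap_mono (hm i)
  refine (ae_eq_condExp_of_forall_setIntegral_eq_of_isPiSystem hle
    (@generateFrom_pi ι Ω _ m).symm (@isPiSystem_pi ι Ω m) (Integrable.fintype_prod_dep hX)
    (Integrable.fintype_prod_dep fun i => integrable_condExp) ?_ ?_ ?_).symm
  · refine (Finset.stronglyMeasurable_fun_prod _ fun i _ => ?_).aestronglyMeasurable
    exact stronglyMeasurable_condExp.comp_measurable (@measurable_pi_apply ι Ω m i)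
  · rintro _ ⟨s, hs, rfl⟩
    rw [setIntegral_univ_pi_prod, setIntegral_univ_pi_prod]
    exact Finset.prod_congr rfl fun i _ => setIntegral_condExp (hm i) (hX i) (hs i (mem_univ i))
  · rw [integral_fintype_prod_eq_prod, integral_fintype_prod_eq_prod]
    exact Finset.prod_congr rfl fun i _ => integral_condExp (hm i)

end MeasureTheory

/-- **Proposition 3.1 (iii) (independence).**  For the partially consistent
orthant nonlinear expectation `𝔈_S(X) = esssup_{Q ∈ 𝒬} E^Q(X | ℱ(S))`, with
`𝒬` the family of products of the marginal families `𝒬^{(m)}`, and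
`Y(ω) = ∏_m X^{(m)}(ω^{(m)})` a product of nonnegative bounded marginal random
variables, `𝔈_S(Y) = ∏_m ℰ^{(m)}(X^{(m)} | ℱ^{(m)}_{S^{(m)}})` a.s. -/
theorem stmt13 {ι : Type*} [Fintype ι] {Ω : ι → Type*}
    (m' : ∀ i, MeasurableSpace (Ω i))
    [mΩ : ∀ i, MeasurableSpace (Ω i)]
    (hm' : ∀ i, m' i ≤ mΩ i)
    (P : ∀ i, Measure (Ω i)) [∀ i, IsProbabilityMeasure (P i)]
    (𝒬 : ∀ i, Set (Measure (Ω i))) (h𝒬ne : ∀ i, (𝒬 i).Nonempty)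
    (h𝒬 : ∀ i, ∀ q ∈ 𝒬 i, IsProbabilityMeasure q ∧ q ≪ P i ∧ P i ≪ q)
    -- the marginal nonlinear expectations `ℰ^{(m)}(· | ℱ^{(m)}_{S^{(m)}})`
    (Em : ∀ i, (Ω i → ℝ) → Ω i → ℝ)
    (hEmUB : ∀ i (X : Ω i → ℝ), ∀ q ∈ 𝒬 i, q[X | m' i] ≤ᵐ[P i] Em i X)
    (hEmLeast : ∀ i (X : Ω i → ℝ) (Z : Ω i → ℝ),
      (∀ q ∈ 𝒬 i, q[X | m' i] ≤ᵐ[P i] Z) → Em i X ≤ᵐ[P i] Z)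
    -- the orthant nonlinear expectation `𝔈_S`
    (ES : ((∀ i, Ω i) → ℝ) → (∀ i, Ω i) → ℝ)
    (hESUB : ∀ Y : (∀ i, Ω i) → ℝ, ∀ Q ∈ productFamily 𝒬,
      Q[Y | ⨆ i, (m' i).comap (fun ω => ω i)] ≤ᵐ[Measure.pi P] ES Y)
    (hESLeast : ∀ (Y : (∀ i, Ω i) → ℝ) (Z : (∀ i, Ω i) → ℝ),
      (∀ Q ∈ productFamily 𝒬,
        Q[Y | ⨆ i, (m' i).comap (fun ω => ω i)] ≤ᵐ[Measure.pi P] Z) →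
      ES Y ≤ᵐ[Measure.pi P] Z)
    -- the product random variable
    (X : ∀ i, Ω i → ℝ) (hXmeas : ∀ i, Measurable (X i))
    (hXpos : ∀ i ω, 0 ≤ X i ω) (hXbdd : ∀ i, ∃ K, ∀ ω, |X i ω| ≤ K) :
    ES (fun ω => ∏ i, X i (ω i)) =ᵐ[Measure.pi P]
      fun ω => ∏ i, Em i (X i) (ω i) := by
  choose K hK using hXbdd
  have hX : ∀ i x, X i x ∈ Icc 0 (K i) := fun i x => ⟨hXpos i x, (le_abs_self _).trans (hK i x)⟩
  have hXint : ∀ i (q : Measure (Ω i)) [IsFiniteMeasure q], Integrable (X i) q := fun i q _ =>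
    .of_mem_Icc 0 (K i) (hXmeas i).aemeasurable (ae_of_all _ (hX i))
  have hbound : ∀ i, ∀ q ∈ 𝒬 i, ∀ᵐ x ∂P i, q[X i | m' i] x ∈ Icc 0 (K i) := fun i q hq =>
    have := (h𝒬 i q hq).1
    (h𝒬 i q hq).2.2.ae_le (ae_condExp_mem_Icc (hm' i) (hXint i q) (ae_of_all _ (hX i)))
  have hfactor : ∀ (q : ∀ i, Measure (Ω i)) [∀ i, IsProbabilityMeasure (q i)], (∀ i, q i ∈ 𝒬 i) →
      (Measure.pi q)[fun ω => ∏ i, X i (ω i) | MeasurableSpace.pi (m := m')]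
        =ᵐ[Measure.pi P] fun ω => ∏ i, (q i)[X i | m' i] (ω i) := fun q _ hq =>
    (Measure.AbsolutelyContinuous.pi fun i => (h𝒬 i _ (hq i)).2.2).ae_eq
      (condExp_pi_prod hm' fun i => hXint i (q i))
  refine EventuallyLE.antisymm (hESLeast _ _ ?_) ?_
  · rintro _ ⟨q, _, hq, rfl⟩
    filter_upwards [hfactor q hq, Measure.ae_pi_of_forall fun i =>
      (hbound i _ (hq i)).and (hEmUB i (X i) _ (hq i))] with ω hqω hω
    exact hqω.trans_le <| Finset.prod_le_prod (fun i _ => (hω i).1.1) fun i _ => (hω i).2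
  · choose u hu𝒬 hu using fun i => exists_seq_mem_ae_eq_iSup (h𝒬ne i)
      (fun q _ => stronglyMeasurable_condExp.measurable.mono (hm' i) le_rfl) (hbound i)
      (hEmUB i (X i)) (hEmLeast i (X i))
    have hprod := ae_prod_ciSup_le
      (fun i => (ae_all_iff.2 fun n => hbound i _ (hu𝒬 i n)).mono fun x hx =>
        ⟨K i, forall_mem_range.2 fun n => (hx n).2⟩)
      fun σ =>
        have : ∀ i, IsProbabilityMeasure (u i (σ i)) := fun i => (h𝒬 i _ (hu𝒬 i (σ i))).1
        (hfactor _ fun i => hu𝒬 i (σ i)).symm.trans_le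
          (hESUB _ _ ⟨_, this, fun i => hu𝒬 i (σ i), rfl⟩)
    filter_upwards [hprod, Measure.ae_pi_of_forall hu] with ω hω huω
    simpa only [huω] using hω
end

section
/- Given a simple-form allocation strategy $\rho$ with recording sequence $\eta$, define the decision filtration $\mathcal{G}^\rho_n := \{A \in \mathcal{F}(T) : A \cap \{\eta_n = r\} \in \mathcal{F}(r) \text{ for all } r\}$ and the observed filtration $\mathcal{H}^\rho_n := \sigma(\xi^\rho_1, \dots, \xi^\rho_n)$ generated by the realized observations $\xi^\rho_k := \xi^{(\rho_{k-1})}_{\eta^{(\rho_{k-1})}_k}$. Then $\mathcal{G}^\rho_n = \mathcal{H}^\rho_n$ for all $n$, and moreover $(\mathcal{G}^\rho_n)_{n\ge0}$ is increasing in $n$. -/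
open MeasureTheory

variable {M : ℕ} {Ω : Fin M → Type*}

/-- `ℱ^{(m)}_t`: the σ-algebra on `Ω m` generated by the first `t`
observations `ξ m 1, …, ξ m t` of the `m`-th bandit. -/
def compF (ξ : ∀ m : Fin M, ℕ → Ω m → ℝ) (m : Fin M) (t : ℕ) :
    MeasurableSpace (Ω m) :=
  ⨆ k ∈ Finset.Icc 1 t, MeasurableSpace.comap (ξ m k) inferInstance

/-- The orthant σ-algebra `ℱ(r) = ⨂_m ℱ^{(m)}_{r^{(m)}}` on the product
space. -/
def orthF (ξ : ∀ m : Fin M, ℕ → Ω m → ℝ) (r : Fin M → ℕ) :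
    MeasurableSpace (∀ m, Ω m) :=
  ⨆ m, (compF ξ m (r m)).comap fun ω => ω m

/-- The recording sequence `η` of a simple-form strategy `ρ`:
`η 0 = 0` and `η (n+1) = η n + e^{(ρ n)}`, counting plays of each bandit. -/
def record (ρ : ℕ → (∀ m, Ω m) → Fin M) : ℕ → (∀ m, Ω m) → Fin M → ℕ
  | 0, _, _ => 0
  | n + 1, ω, m => record ρ n ω m + (if ρ n ω = m then 1 else 0)

/-- The decision filtration
`𝒢^ρ_n = {A ∈ ℱ(T) : A ∩ {η_n = r} ∈ ℱ(r) for all r}`. -/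
def Gset (ξ : ∀ m : Fin M, ℕ → Ω m → ℝ) (ρ : ℕ → (∀ m, Ω m) → Fin M)
    (n : ℕ) : Set (Set (∀ m, Ω m)) :=
  {A | MeasurableSet[⨆ r : Fin M → ℕ, orthF ξ r] A ∧
    ∀ r : Fin M → ℕ,
      MeasurableSet[orthF ξ r] (A ∩ {ω | record ρ n ω = r})}

/-- The realized observation at the `k`-th play:
`ξ^ρ_k = ξ^{(ρ_{k-1})}_{η^{(ρ_{k-1})}_k}`. -/
noncomputable def obs (ξ : ∀ m : Fin M, ℕ → Ω m → ℝ)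
    (ρ : ℕ → (∀ m, Ω m) → Fin M) (k : ℕ) : (∀ m, Ω m) → ℝ :=
  fun ω => ξ (ρ (k - 1) ω) (record ρ k ω (ρ (k - 1) ω)) (ω (ρ (k - 1) ω))

/-- The observed filtration `ℋ^ρ_n = σ(ξ^ρ_1, …, ξ^ρ_n)`. -/
noncomputable def obsF (ξ : ∀ m : Fin M, ℕ → Ω m → ℝ)
    (ρ : ℕ → (∀ m, Ω m) → Fin M) (n : ℕ) : MeasurableSpace (∀ m, Ω m) :=
  ⨆ k ∈ Finset.Icc 1 n, MeasurableSpace.comap (obs ξ ρ k) inferInstance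

section AuxLemmas

variable {ξ : ∀ m : Fin M, ℕ → Ω m → ℝ} {ρ : ℕ → (∀ m, Ω m) → Fin M}

variable {ξ : ∀ m : Fin M, ℕ → Ω m → ℝ} {ρ : ℕ → (∀ m, Ω m) → Fin M}

private lemma meas_iUnion {α ι : Type*} [Countable ι] {m : MeasurableSpace α} {f : ι → Set α}
    (h : ∀ i, MeasurableSet[m] (f i)) : MeasurableSet[m] (⋃ i, f i) := by
  letI := m; exact MeasurableSet.iUnion h

private lemma meas_empty {α : Type*} {m : MeasurableSpace α} : MeasurableSet[m] (∅ : Set α) := by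
  letI := m; exact MeasurableSet.empty

private lemma meas_univ {α : Type*} {m : MeasurableSpace α} : MeasurableSet[m] (Set.univ : Set α) := by
  letI := m; exact MeasurableSet.univ

private lemma le_meas {α} {m1 m2 : MeasurableSpace α} (h : m1 ≤ m2) {s : Set α}
    (hs : MeasurableSet[m1] s) : MeasurableSet[m2] s := h _ hs

private lemma compF_mono (m : Fin M) {s t : ℕ} (h : s ≤ t) : compF ξ m s ≤ compF ξ m t := by
  refine iSup_le fun k => iSup_le fun hk => ?_
  exact le_iSup₂ (f := fun k (_ : k ∈ Finset.Icc 1 t) => MeasurableSpace.comap (ξ m k) inferInstance)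
    k (Finset.mem_Icc.mpr ⟨(Finset.mem_Icc.mp hk).1, le_trans (Finset.mem_Icc.mp hk).2 h⟩)

private lemma orthF_mono {r r' : Fin M → ℕ} (h : r ≤ r') : orthF ξ r ≤ orthF ξ r' :=
  iSup_mono fun m => MeasurableSpace.comap_mono (compF_mono m (h m))

private def dec (s : Fin M → ℕ) (m : Fin M) : Fin M → ℕ := fun m' => s m' - if m' = m then 1 else 0

private lemma dec_le (s : Fin M → ℕ) (m : Fin M) : dec s m ≤ s := fun _ => Nat.sub_le _ _

private lemma record_succ_iff {n : ℕ} {ω : ∀ m, Ω m} {m : Fin M} (hm : ρ n ω = m)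
    (s : Fin M → ℕ) :
    record ρ (n + 1) ω = s ↔ 1 ≤ s m ∧ record ρ n ω = dec s m := by
  have hrec : ∀ m', record ρ (n + 1) ω m' = record ρ n ω m' + if m = m' then 1 else 0 := by
    intro m'; simp [record, hm]
  constructor
  · intro h
    have h' : ∀ m', record ρ n ω m' + (if m = m' then 1 else 0) = s m' := fun m' => by
      rw [← hrec]; exact congrFun h m'
    refine ⟨?_, funext fun m' => ?_⟩
    · have := h' m; simp at this; omega
    · have := h' m'
      by_cases hmm : m' = m
      · subst hmm; simp at this ⊢; simp [dec]; omega
      · simp [Ne.symm hmm] at this; simp [dec, hmm]; omega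
  · rintro ⟨h1, h2⟩
    funext m'
    rw [hrec m']
    have := congrFun h2 m'
    by_cases hmm : m' = m
    · subst hmm; simp [dec] at this ⊢; omega
    · simp [dec, hmm, Ne.symm hmm] at this ⊢; omega

private lemma succ_inter_decomp (A : Set (∀ m, Ω m)) (n : ℕ) (s : Fin M → ℕ) :
    A ∩ {ω | record ρ (n + 1) ω = s} =
      ⋃ m : Fin M, if 1 ≤ s m then
        A ∩ ({ω | ρ n ω = m} ∩ {ω | record ρ n ω = dec s m}) else ∅ := by
  ext ω
  simp only [Set.mem_inter_iff, Set.mem_setOf_eq, Set.mem_iUnion]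
  constructor
  · rintro ⟨hA, hr⟩
    refine ⟨ρ n ω, ?_⟩
    obtain ⟨h1, h2⟩ := (record_succ_iff rfl s).mp hr
    rw [if_pos h1]
    exact ⟨hA, rfl, h2⟩
  · rintro ⟨m, hm⟩
    split_ifs at hm with h1
    · obtain ⟨hA, hρ, hrec⟩ := hm
      exact ⟨hA, (record_succ_iff hρ s).mpr ⟨h1, hrec⟩⟩
    · exact absurd hm (Set.notMem_empty ω)

private lemma eta_mem (had : ∀ n (m : Fin M), {ω | ρ n ω = m} ∈ Gset ξ ρ n) (n : ℕ) (s : Fin M → ℕ) :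
    MeasurableSet[orthF ξ s] {ω | record ρ n ω = s} := by
  induction n generalizing s with
  | zero =>
    have h0 : ∀ ω : ∀ m, Ω m, record ρ 0 ω = (fun _ => 0 : Fin M → ℕ) :=
      fun ω => funext fun _ => rfl
    by_cases h : s = fun _ => 0
    · have : {ω | record ρ 0 ω = s} = Set.univ := by
        ext ω; simp [h0 ω, h]
      rw [this]; exact meas_univ
    · have : {ω | record ρ 0 ω = s} = ∅ := by
        ext ω; simp [h0 ω]; exact fun heq => h heq.symm
      rw [this]; exact meas_empty
  | succ n IH =>
    have := succ_inter_decomp (ρ := ρ) Set.univ n s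
    rw [Set.univ_inter] at this
    rw [this]
    refine meas_iUnion fun m => ?_
    split_ifs with h1
    · rw [Set.univ_inter]
      exact le_meas (orthF_mono (dec_le s m)) ((had n m).2 (dec s m))
    · exact meas_empty

private lemma mem_Gset_of {A : Set (∀ m, Ω m)} {n : ℕ}
    (h : ∀ r, MeasurableSet[orthF ξ r] (A ∩ {ω | record ρ n ω = r})) : A ∈ Gset ξ ρ n := by
  refine ⟨?_, h⟩
  have hA : A = ⋃ r : Fin M → ℕ, A ∩ {ω | record ρ n ω = r} := by
    ext ω
    simp only [Set.mem_iUnion, Set.mem_inter_iff, Set.mem_setOf_eq]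
    exact ⟨fun hA => ⟨record ρ n ω, hA, rfl⟩, fun ⟨r, h1, _⟩ => h1⟩
  rw [hA]
  exact meas_iUnion fun r => le_meas (le_iSup (orthF ξ) r) (h r)

private lemma eta_set_in_Gset (had : ∀ n (m : Fin M), {ω | ρ n ω = m} ∈ Gset ξ ρ n) (n : ℕ) (s : Fin M → ℕ) :
    {ω | record ρ n ω = s} ∈ Gset ξ ρ n := by
  refine mem_Gset_of fun r => ?_
  by_cases h : r = s
  · subst h; rw [Set.inter_self]; exact eta_mem had n r
  · have : {ω | record ρ n ω = s} ∩ {ω | record ρ n ω = r} = ∅ := by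
      ext ω; simp only [Set.mem_inter_iff, Set.mem_setOf_eq, Set.mem_empty_iff_false, iff_false,
        not_and]
      exact fun h1 h2 => h (h2 ▸ h1 ▸ rfl)
    rw [this]; exact meas_empty

private lemma Gset_mono (had : ∀ n (m : Fin M), {ω | ρ n ω = m} ∈ Gset ξ ρ n) (n : ℕ) : Gset ξ ρ n ⊆ Gset ξ ρ (n + 1) := by
  intro A hA
  refine mem_Gset_of fun s => ?_
  rw [succ_inter_decomp]
  refine meas_iUnion fun m => ?_
  split_ifs with h1
  · have heq : A ∩ ({ω | ρ n ω = m} ∩ {ω | record ρ n ω = dec s m}) =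
        (A ∩ {ω | record ρ n ω = dec s m}) ∩ ({ω | ρ n ω = m} ∩ {ω | record ρ n ω = dec s m}) := by
      ext ω; simp only [Set.mem_inter_iff, Set.mem_setOf_eq]; tauto
    rw [heq]
    exact le_meas (orthF_mono (dec_le s m)) ((hA.2 (dec s m)).inter ((had n m).2 (dec s m)))
  · exact meas_empty


private lemma obs_succ_mem_Gset (had : ∀ n (m : Fin M), {ω | ρ n ω = m} ∈ Gset ξ ρ n)
    (n : ℕ) {S : Set ℝ} (hS : MeasurableSet S) :
    obs ξ ρ (n + 1) ⁻¹' S ∈ Gset ξ ρ (n + 1) := by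
  refine mem_Gset_of fun r => ?_
  have hdecomp : obs ξ ρ (n + 1) ⁻¹' S ∩ {ω | record ρ (n + 1) ω = r} =
      ⋃ m : Fin M, if 1 ≤ r m then
        (({ω | ρ n ω = m} ∩ {ω | record ρ n ω = dec r m}) ∩ {ω | ξ m (r m) (ω m) ∈ S})
      else ∅ := by
    ext ω
    simp only [Set.mem_inter_iff, Set.mem_preimage, Set.mem_setOf_eq, Set.mem_iUnion]
    constructor
    · rintro ⟨hS', hr⟩
      refine ⟨ρ n ω, ?_⟩
      obtain ⟨h1, h2⟩ := (record_succ_iff rfl r).mp hr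
      rw [if_pos h1]
      refine ⟨⟨rfl, h2⟩, ?_⟩
      have hval : obs ξ ρ (n + 1) ω = ξ (ρ n ω) (r (ρ n ω)) (ω (ρ n ω)) := by
        rw [show obs ξ ρ (n + 1) ω
            = ξ (ρ n ω) (record ρ (n + 1) ω (ρ n ω)) (ω (ρ n ω)) from rfl, hr]
      show ξ (ρ n ω) (r (ρ n ω)) (ω (ρ n ω)) ∈ S
      rw [← hval]
      exact hS'
    · rintro ⟨m, hm⟩
      split_ifs at hm with h1
      · obtain ⟨⟨hρ, hrec⟩, hS'⟩ := hm
        have hr : record ρ (n + 1) ω = r := (record_succ_iff hρ r).mpr ⟨h1, hrec⟩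
        refine ⟨?_, hr⟩
        have hρ' : ρ n ω = m := hρ
        have hval : obs ξ ρ (n + 1) ω = ξ m (r m) (ω m) := by
          rw [show obs ξ ρ (n + 1) ω
              = ξ (ρ n ω) (record ρ (n + 1) ω (ρ n ω)) (ω (ρ n ω)) from rfl, hρ', hr]
        show obs ξ ρ (n + 1) ω ∈ S
        rw [hval]
        exact hS'
      · exact absurd hm (Set.notMem_empty ω)
  rw [hdecomp]
  refine meas_iUnion fun m => ?_
  split_ifs with h1
  · have hD : MeasurableSet[orthF ξ r]
        ({ω | ρ n ω = m} ∩ {ω | record ρ n ω = dec r m}) :=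
      le_meas (orthF_mono (dec_le r m)) ((had n m).2 (dec r m))
    have hC : MeasurableSet[orthF ξ r] {ω : ∀ m, Ω m | ξ m (r m) (ω m) ∈ S} := by
      have h0 : MeasurableSet[MeasurableSpace.comap (ξ m (r m)) inferInstance]
          ((ξ m (r m)) ⁻¹' S) := ⟨S, hS, rfl⟩
      have hcc : MeasurableSet[compF ξ m (r m)] ((ξ m (r m)) ⁻¹' S) := by
        refine le_meas ?_ h0
        exact le_iSup₂ (f := fun k (_ : k ∈ Finset.Icc 1 (r m)) =>
          MeasurableSpace.comap (ξ m k) inferInstance) (r m) (Finset.mem_Icc.mpr ⟨h1, le_rfl⟩)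
      have hle : (compF ξ m (r m)).comap (fun ω : ∀ a, Ω a => ω m) ≤ orthF ξ r := by
        unfold orthF
        exact le_iSup (fun m' => (compF ξ m' (r m')).comap fun ω : ∀ a, Ω a => ω m') m
      exact le_meas hle ⟨_, hcc, rfl⟩
    exact hD.inter hC
  · exact meas_empty

/-- The Gset collection as a measurable space structure. -/
private def Gsigma (ξ : ∀ m : Fin M, ℕ → Ω m → ℝ) (ρ : ℕ → (∀ m, Ω m) → Fin M)
    (had : ∀ n (m : Fin M), {ω | ρ n ω = m} ∈ Gset ξ ρ n) (n : ℕ) :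
    MeasurableSpace (∀ m, Ω m) where
  MeasurableSet' A := A ∈ Gset ξ ρ n
  measurableSet_empty := mem_Gset_of fun r => by
    rw [Set.empty_inter]; exact meas_empty
  measurableSet_compl := fun A hA => mem_Gset_of fun r => by
    have : Aᶜ ∩ {ω | record ρ n ω = r} =
        {ω | record ρ n ω = r} \ (A ∩ {ω | record ρ n ω = r}) := by
      ext ω; simp only [Set.mem_inter_iff, Set.mem_compl_iff, Set.mem_diff, Set.mem_setOf_eq]
      tauto
    rw [this]
    exact (eta_mem had n r).diff (hA.2 r)
  measurableSet_iUnion := fun f hf => mem_Gset_of fun r => by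
    rw [Set.iUnion_inter]
    exact meas_iUnion fun i => (hf i).2 r

private lemma Gset_le_of_le (had : ∀ n (m : Fin M), {ω | ρ n ω = m} ∈ Gset ξ ρ n)
    {a b : ℕ} (h : a ≤ b) : Gset ξ ρ a ⊆ Gset ξ ρ b := by
  induction b, h using Nat.le_induction with
  | base => exact fun _ h => h
  | succ b hab IH => exact fun A hA => Gset_mono had b (IH hA)

private lemma obsF_mono {a b : ℕ} (h : a ≤ b) : obsF ξ ρ a ≤ obsF ξ ρ b := by
  refine iSup_le fun k => iSup_le fun hk => ?_
  rw [Finset.mem_Icc] at hk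
  exact le_iSup₂ (f := fun k (_ : k ∈ Finset.Icc 1 b) =>
    MeasurableSpace.comap (obs ξ ρ k) inferInstance) k (Finset.mem_Icc.mpr ⟨hk.1, hk.2.trans h⟩)

private lemma H_le_G (had : ∀ n (m : Fin M), {ω | ρ n ω = m} ∈ Gset ξ ρ n) (n : ℕ)
    {A : Set (∀ m, Ω m)} (hA : MeasurableSet[obsF ξ ρ n] A) : A ∈ Gset ξ ρ n := by
  have hle : obsF ξ ρ n ≤ Gsigma ξ ρ had n := by
    refine iSup_le fun k => iSup_le fun hk => ?_
    rw [Finset.mem_Icc] at hk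
    obtain ⟨j, rfl⟩ : ∃ j, k = j + 1 := ⟨k - 1, by omega⟩
    intro E hE
    obtain ⟨S, hS, rfl⟩ := hE
    show obs ξ ρ (j + 1) ⁻¹' S ∈ Gset ξ ρ n
    exact Gset_le_of_le had hk.2 (obs_succ_mem_Gset had j hS)
  exact hle _ hA


private def traceS {α : Type*} (m : MeasurableSpace α) (D : Set α) (hD : MeasurableSet[m] D) :
    MeasurableSpace α where
  MeasurableSet' E := MeasurableSet[m] (E ∩ D)
  measurableSet_empty := by
    show MeasurableSet[m] (∅ ∩ D)
    rw [Set.empty_inter]; exact meas_empty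
  measurableSet_compl := fun E hE => by
    show MeasurableSet[m] (Eᶜ ∩ D)
    have h : Eᶜ ∩ D = D \ (E ∩ D) := by
      ext x; simp only [Set.mem_inter_iff, Set.mem_compl_iff, Set.mem_diff]; tauto
    rw [h]; exact hD.diff hE
  measurableSet_iUnion := fun f hf => by
    show MeasurableSet[m] ((⋃ i, f i) ∩ D)
    rw [Set.iUnion_inter]; exact meas_iUnion hf

private lemma G_le_H (had : ∀ n (m : Fin M), {ω | ρ n ω = m} ∈ Gset ξ ρ n) :
    ∀ n (A : Set (∀ m, Ω m)), A ∈ Gset ξ ρ n → MeasurableSet[obsF ξ ρ n] A := by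
  intro n
  induction n with
  | zero =>
    intro A hA
    have h0 : A ∩ {ω | record ρ 0 ω = fun _ => 0} = A := by
      ext ω
      simp only [Set.mem_inter_iff, Set.mem_setOf_eq, and_iff_left_iff_imp]
      exact fun _ => funext fun _ => rfl
    have hbot : orthF ξ (fun _ => 0) = ⊥ := by
      have hc : ∀ m : Fin M, compF ξ m 0 = ⊥ := by
        intro m
        rw [compF, Finset.Icc_eq_empty (by omega)]
        simp
      rw [orthF]
      simp [hc, MeasurableSpace.comap_bot]
    have := hA.2 (fun _ => 0)
    rw [h0, hbot, MeasurableSpace.measurableSet_bot_iff] at this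
    rcases this with h | h
    · rw [h]; exact meas_empty
    · rw [h]; exact meas_univ
  | succ n IH =>
    intro A hA
    have hdecomp : A = ⋃ p : Fin M × (Fin M → ℕ),
        A ∩ ({ω | ρ n ω = p.1} ∩ {ω | record ρ n ω = p.2}) := by
      ext ω
      simp only [Set.mem_iUnion, Set.mem_inter_iff, Set.mem_setOf_eq]
      exact ⟨fun h => ⟨(ρ n ω, record ρ n ω), h, rfl, rfl⟩, fun ⟨p, h, _⟩ => h⟩
    rw [hdecomp]
    refine meas_iUnion fun p => ?_
    obtain ⟨m, s⟩ := p
    set D : Set (∀ m, Ω m) := {ω | ρ n ω = m} ∩ {ω | record ρ n ω = s} with hDdef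
    -- D is measurable in obsF (n+1)
    have hDn : MeasurableSet[obsF ξ ρ n] D :=
      (IH _ (had n m)).inter (IH _ (eta_set_in_Gset had n s))
    have hle : obsF ξ ρ n ≤ obsF ξ ρ (n + 1) := obsF_mono (Nat.le_succ n)
    have hD1 : MeasurableSet[obsF ξ ρ (n + 1)] D := le_meas hle hDn
    set r : Fin M → ℕ := fun m' => s m' + if m' = m then 1 else 0 with hrdef
    have hsub : ∀ ω ∈ D, record ρ (n + 1) ω = r := by
      rintro ω ⟨hρ, hs⟩
      have hρ' : ρ n ω = m := hρ
      have hs' : record ρ n ω = s := hs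
      funext m'
      have : record ρ (n + 1) ω m' = record ρ n ω m' + if ρ n ω = m' then 1 else 0 := by
        simp [record]
      rw [this, hρ', congrFun hs' m']
      by_cases hmm : m' = m
      · subst hmm; simp [hrdef]
      · simp [hrdef, hmm, Ne.symm hmm]
    have hAD : MeasurableSet[orthF ξ r] (A ∩ D) := by
      have heq : A ∩ D = (A ∩ {ω | record ρ (n + 1) ω = r}) ∩ D := by
        ext ω
        constructor
        · rintro ⟨h1, h2⟩; exact ⟨⟨h1, hsub ω h2⟩, h2⟩
        · rintro ⟨⟨h1, _⟩, h2⟩; exact ⟨h1, h2⟩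
      rw [heq]
      have hsr : s ≤ r := fun m' => Nat.le_add_right _ _
      exact (hA.2 r).inter (le_meas (orthF_mono hsr) ((had n m).2 s))
    -- the trace σ-algebra of obsF (n+1) on D contains orthF r
    have hkey : orthF ξ r ≤ traceS (obsF ξ ρ (n + 1)) D hD1 := by
      rw [orthF]
      refine iSup_le fun m' => ?_
      rw [compF, MeasurableSpace.comap_iSup]
      refine iSup_le fun k => ?_
      rw [MeasurableSpace.comap_iSup]
      refine iSup_le fun hk => ?_
      rw [Finset.mem_Icc] at hk
      rw [MeasurableSpace.comap_comp]
      intro E hE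
      obtain ⟨S, hS, rfl⟩ := MeasurableSpace.measurableSet_comap.mp hE
      show MeasurableSet[obsF ξ ρ (n + 1)]
        ((ξ m' k ∘ fun ω : ∀ a, Ω a => ω m') ⁻¹' S ∩ D)
      by_cases hcase : m' = m ∧ k = s m + 1
      · obtain ⟨rfl, rfl⟩ := hcase
        -- on D the observed value obs (n+1) equals ξ m' (s m' + 1) ∘ eval m'
        have hval : ∀ ω ∈ D, obs ξ ρ (n + 1) ω = ξ m' (s m' + 1) (ω m') := by
          rintro ω hω
          obtain ⟨hρ, hs⟩ := hω
          have hρ' : ρ n ω = m' := hρ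
          have hr := hsub ω ⟨hρ, hs⟩
          rw [show obs ξ ρ (n + 1) ω
              = ξ (ρ n ω) (record ρ (n + 1) ω (ρ n ω)) (ω (ρ n ω)) from rfl, hρ', hr]
          have : r m' = s m' + 1 := by rw [hrdef]; simp
          rw [this]
        have heq : (ξ m' (s m' + 1) ∘ fun ω : ∀ a, Ω a => ω m') ⁻¹' S ∩ D
            = obs ξ ρ (n + 1) ⁻¹' S ∩ D := by
          ext ω
          simp only [Set.mem_inter_iff, Set.mem_preimage, Function.comp_apply]
          constructor
          · rintro ⟨h1, h2⟩; exact ⟨by rw [hval ω h2]; exact h1, h2⟩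
          · rintro ⟨h1, h2⟩; exact ⟨by rw [← hval ω h2]; exact h1, h2⟩
        rw [heq]
        refine MeasurableSet.inter ?_ hD1
        refine le_meas ?_ (MeasurableSpace.measurableSet_comap.mpr ⟨S, hS, rfl⟩ :
          MeasurableSet[MeasurableSpace.comap (obs ξ ρ (n + 1)) inferInstance]
            (obs ξ ρ (n + 1) ⁻¹' S))
        exact le_iSup₂ (f := fun k (_ : k ∈ Finset.Icc 1 (n + 1)) =>
          MeasurableSpace.comap (obs ξ ρ k) inferInstance) (n + 1)
          (Finset.mem_Icc.mpr ⟨by omega, le_rfl⟩)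
      · -- then k ≤ s m' and the set is already observable at time n
        have hks : k ≤ s m' := by
          by_cases hmm : m' = m
          · have h1 : r m' = s m' + 1 := by rw [hrdef]; simp [hmm]
            have h2 : k ≠ s m + 1 := fun h => hcase ⟨hmm, h⟩
            have h3 : s m' = s m := by rw [hmm]
            omega
          · have h1 : r m' = s m' := by rw [hrdef]; simp [hmm]
            omega
        have hC : MeasurableSet[orthF ξ s]
            ((ξ m' k ∘ fun ω : ∀ a, Ω a => ω m') ⁻¹' S) := by
          have hcc : MeasurableSet[compF ξ m' (s m')] ((ξ m' k) ⁻¹' S) := by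
            refine le_meas ?_ (MeasurableSpace.measurableSet_comap.mpr ⟨S, hS, rfl⟩ :
              MeasurableSet[MeasurableSpace.comap (ξ m' k) inferInstance] ((ξ m' k) ⁻¹' S))
            exact le_iSup₂ (f := fun k (_ : k ∈ Finset.Icc 1 (s m')) =>
              MeasurableSpace.comap (ξ m' k) inferInstance) k (Finset.mem_Icc.mpr ⟨hk.1, hks⟩)
          have hle2 : (compF ξ m' (s m')).comap (fun ω : ∀ a, Ω a => ω m') ≤ orthF ξ s := by
            unfold orthF
            exact le_iSup (fun a => (compF ξ a (s a)).comap fun ω : ∀ a, Ω a => ω a) m'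
          exact le_meas hle2 (MeasurableSpace.measurableSet_comap.mpr ⟨_, hcc, rfl⟩)
        have hCs : (ξ m' k ∘ fun ω : ∀ a, Ω a => ω m') ⁻¹' S ∩ {ω | record ρ n ω = s}
            ∈ Gset ξ ρ n := by
          refine mem_Gset_of fun r' => ?_
          by_cases hrs : r' = s
          · subst hrs
            rw [Set.inter_assoc, Set.inter_self]
            exact hC.inter (eta_mem had n r')
          · have hempty : (ξ m' k ∘ fun ω : ∀ a, Ω a => ω m') ⁻¹' S ∩ {ω | record ρ n ω = s}
                ∩ {ω | record ρ n ω = r'} = ∅ := by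
              ext ω
              constructor
              · rintro ⟨⟨_, h1⟩, h2⟩
                exact absurd ((show record ρ n ω = s from h1).symm.trans h2)
                  (fun h => hrs h.symm)
              · intro h
                exact absurd h (Set.notMem_empty ω)
            rw [hempty]
            exact meas_empty
        have hsplit : (ξ m' k ∘ fun ω : ∀ a, Ω a => ω m') ⁻¹' S ∩ D =
            {ω | ρ n ω = m} ∩
              ((ξ m' k ∘ fun ω : ∀ a, Ω a => ω m') ⁻¹' S ∩ {ω | record ρ n ω = s}) := by
          rw [hDdef]
          ext ω
          simp only [Set.mem_inter_iff, Set.mem_preimage, Set.mem_setOf_eq]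
          tauto
        rw [hsplit]
        exact le_meas hle ((IH _ (had n m)).inter (IH _ hCs))
    have hfinal := hkey _ hAD
    show MeasurableSet[obsF ξ ρ (n + 1)] (A ∩ D)
    have : A ∩ D ∩ D = A ∩ D := by rw [Set.inter_assoc, Set.inter_self]
    rw [← this]
    exact hfinal


end AuxLemmas

/-- **Theorem A.13 (with Lemma A.11).**  For a simple-form (adapted)
allocation strategy `ρ` with recording sequence `η`, the decision filtration
`𝒢^ρ_n` coincides with the observed filtration `ℋ^ρ_n` generated by the
realized observations, and `(𝒢^ρ_n)` is increasing in `n`. -/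
theorem stmt18 (hM : 0 < M)
    (ξ : ∀ m : Fin M, ℕ → Ω m → ℝ)
    (ρ : ℕ → (∀ m, Ω m) → Fin M)
    -- `ρ` is adapted: `{ρ n = m} ∈ 𝒢^ρ_n` for each `n`, `m`
    (hadapted : ∀ n (m : Fin M), {ω | ρ n ω = m} ∈ Gset ξ ρ n) :
    (∀ n (A : Set (∀ m, Ω m)),
      MeasurableSet[obsF ξ ρ n] A ↔ A ∈ Gset ξ ρ n) ∧
    (∀ n, Gset ξ ρ n ⊆ Gset ξ ρ (n + 1)) := by
  constructor
  · intro n A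
    exact ⟨fun h => H_le_G hadapted n h, fun h => G_le_H hadapted n A h⟩
  · intro n
    exact Gset_mono hadapted n
end
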